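/- Let x ≥ 0 and y be integers, and let G_0 be a graph of minimum order in the nonempty family M(x,y). Then |V(G_0)| = χ(G_0) + 2f(G_0) − x − 1. -/

import Mathlib

/-- The chromatic number of `G` as a natural number. -/
noncomputable def chi {V : Type*} (G : SimpleGraph V) : ℕ := G.chromaticNumber.toNat

/-- `f(G) = χ(G) − cl(G)`. -/
noncomputable def fDiff {V : Type*} (G : SimpleGraph V) : ℕ := chi G - G.cliqueNum

/-- Membership in the family `M(x,y) = {G : |V(G)| < χ(G) + 2f(G) − x and f(G) ≤ y}`. -/
def inM (x y : ℤ) {V : Type*} [Fintype V] (G : SimpleGraph V) : Prop :=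
  (Fintype.card V : ℤ) < chi G + 2 * fDiff G - x ∧ (fDiff G : ℤ) ≤ y

/-- The set of orders of members of `M(x,y)`. -/
def McardSet (x y : ℤ) : Set ℕ := {n | ∃ G : SimpleGraph (Fin n), inM x y G}

/-!
Suppose `|V(G₀)| ≤ χ + 2f − x − 2`. Since `x ≥ 0` and `χ ≤ |V(G₀)|`, membership in `M(x,y)` forces
`f(G₀) > 0`, i.e. `ω < χ`. Take a maximum clique `K`. Its complement is not a clique: otherwise
`G₀` is the complement of a bipartite graph, and then `χ = ω` by König's theorem, which follows from
Hall's theorem with deficiency. So there are two non-adjacent vertices outside `K`. Deleting them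
keeps `ω`, lowers `χ` by at most one and the order by two; hence `χ + 2f − x` drops by at most three
and `f` does not grow, giving a smaller member of `M(x,y)`.
-/

open Finset Function SimpleGraph

namespace Finset

variable {ι α : Type*} [DecidableEq α]

theorem exists_injective_sum_fin_of_card_le_card_biUnion_add (t : ι → Finset α) (d : ℕ)
    (h : ∀ s : Finset ι, #s ≤ #(s.biUnion t) + d) :
    ∃ f : ι → α ⊕ Fin d, Injective f ∧ ∀ i a, f i = .inl a → a ∈ t i := by
  have hall (s : Finset ι) : #s ≤ #(s.biUnion fun i => (t i).disjSum (univ : Finset (Fin d))) := by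
    obtain rfl | ⟨i, hi⟩ := s.eq_empty_or_nonempty
    · simp
    have : s.biUnion (fun i => (t i).disjSum univ) =
        (s.biUnion t).disjSum (univ : Finset (Fin d)) := by
      ext (a | a) <;> simp only [mem_biUnion, inl_mem_disjSum, inr_mem_disjSum, mem_univ, and_true]
      exact ⟨fun _ => trivial, fun _ => ⟨i, hi⟩⟩
    rw [this, card_disjSum, card_univ, Fintype.card_fin]
    exact h s
  obtain ⟨f, hf, hft⟩ := (all_card_le_biUnion_card_iff_exists_injective _).mp hall
  exact ⟨f, hf, fun i a hia => inl_mem_disjSum.mp (hia ▸ hft i)⟩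

theorem exists_injective_sum_fin_card_sub_card_biUnion [Fintype ι] (t : ι → Finset α) :
    ∃ S : Finset ι, ∃ f : ι → α ⊕ Fin (#S - #(S.biUnion t)),
      Injective f ∧ ∀ i a, f i = .inl a → a ∈ t i := by
  obtain ⟨S, -, hS⟩ := exists_max_image univ (fun S : Finset ι => #S - #(S.biUnion t))
    univ_nonempty
  refine ⟨S, exists_injective_sum_fin_of_card_le_card_biUnion_add t _ fun s => ?_⟩
  have := hS s (mem_univ s)
  omega

end Finset

namespace SimpleGraph

variable {V W α : Type*} {G : SimpleGraph V} {H : SimpleGraph W}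

theorem Coloring.colorable_of_forall_mem (C : G.Coloring α) (s : Finset α) (h : ∀ v, C v ∈ s) :
    G.Colorable #s := by
  simpa using (Coloring.mk (fun v => (⟨C v, h v⟩ : s))
    fun hadj heq => C.valid hadj (congrArg Subtype.val heq)).colorable

theorem IsIndepSet.colorable_succ_of_induce_compl {t : Set V} (ht : G.IsIndepSet t) {m : ℕ}
    (h : (G.induce tᶜ).Colorable m) : G.Colorable (m + 1) := by
  classical
  obtain ⟨C⟩ := h
  refine (Coloring.mk (fun v => if hv : v ∈ tᶜ then some (C ⟨v, hv⟩) else none)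
    fun {a b} hab heq => ?_).colorable.mono (by simp)
  by_cases ha : a ∈ tᶜ <;> by_cases hb : b ∈ tᶜ <;> simp only [ha, hb, dite_true, dite_false,
    reduceCtorEq, Option.some_inj] at heq
  · exact C.valid (show (G.induce tᶜ).Adj ⟨a, ha⟩ ⟨b, hb⟩ from hab) heq
  · simp only [Set.mem_compl_iff, not_not] at ha hb
    exact ht ha hb (G.ne_of_adj hab) hab

theorem cliqueNum_le_of_copy [Finite W] (f : Copy G H) : G.cliqueNum ≤ H.cliqueNum := by
  obtain ⟨s, hs⟩ := G.exists_isNClique_cliqueNum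
  have : H.IsClique (s.map f.toEmbedding : Set W) := by
    intro a ha b hb hab
    simp only [coe_map, Set.mem_image, mem_coe] at ha hb
    obtain ⟨a, ha, rfl⟩ := ha
    obtain ⟨b, hb, rfl⟩ := hb
    exact f.toHom.map_adj (hs.isClique ha hb fun h => hab (h ▸ rfl))
  simpa [hs.card_eq] using this.card_le_cliqueNum

theorem Iso.cliqueNum_eq [Finite V] [Finite W] (e : G ≃g H) : G.cliqueNum = H.cliqueNum :=
  (cliqueNum_le_of_copy e.toCopy).antisymm (cliqueNum_le_of_copy e.symm.toCopy)

theorem cliqueNum_induce_of_subset [Finite V] {K : Finset V} (hK : G.IsNClique G.cliqueNum K)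
    {s : Set V} (hKs : ↑K ⊆ s) : (G.induce s).cliqueNum = G.cliqueNum := by
  classical
  have hT : (G.induce s).IsClique (K.subtype (· ∈ s) : Set s) := fun a ha b hb hab =>
    hK.isClique (mem_subtype.mp ha) (mem_subtype.mp hb) (Subtype.coe_injective.ne hab)
  have hcard : #(K.subtype (· ∈ s)) = #K := by
    rw [card_subtype, filter_true_of_mem fun v hv => hKs hv]
  refine (cliqueNum_induce_le s).antisymm ?_
  simpa [hcard, hK.card_eq] using hT.card_le_cliqueNum

theorem colorable_card_compl_add_of_injective [Fintype V] [DecidableEq V] {K : Finset V} {d : ℕ}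
    (f : K → V ⊕ Fin d) (hf : Injective f)
    (hfK : ∀ k a, f k = .inl a → a ∉ K ∧ ¬G.Adj k a) : G.Colorable (#Kᶜ + d) := by
  let c : V → V ⊕ Fin d := fun v => if hv : v ∈ K then f ⟨v, hv⟩ else .inl v
  let C : G.Coloring (V ⊕ Fin d) := Coloring.mk c fun {a b} hab heq => by
    by_cases ha : a ∈ K <;> by_cases hb : b ∈ K <;>
      simp only [c, ha, hb, dite_true, dite_false, Sum.inl.injEq] at heq
    · exact G.ne_of_adj hab (congrArg Subtype.val (hf heq))
    · exact (hfK _ _ heq).2 hab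
    · exact (hfK _ _ heq.symm).2 hab.symm
    · exact G.ne_of_adj hab heq
  have hC : ∀ v, c v ∈ Kᶜ.disjSum (univ : Finset (Fin d)) := by
    intro v
    by_cases hv : v ∈ K
    · rcases hfv : f ⟨v, hv⟩ with a | i
      · simpa [c, hv, hfv] using (hfK _ _ hfv).1
      · simp [c, hv, hfv]
    · simp [c, hv]
  simpa [card_disjSum] using C.colorable_of_forall_mem _ hC

theorem isClique_union_sdiff_biUnion_nonAdj [Fintype V] [DecidableEq V] [DecidableRel G.Adj]
    {K S : Finset V} (hK : G.IsClique (K : Set V)) (hKc : G.IsClique (K : Set V)ᶜ) (hS : S ⊆ K) :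
    G.IsClique ↑(S ∪ (Kᶜ \ S.biUnion fun v => {u ∈ Kᶜ | ¬G.Adj v u})) := by
  have hsk : ∀ {v u}, v ∈ S → u ∈ Kᶜ \ S.biUnion (fun v => {u ∈ Kᶜ | ¬G.Adj v u}) → G.Adj v u := by
    intro v u hv hu
    simp only [mem_sdiff, mem_compl, mem_biUnion, mem_filter, not_exists, not_and] at hu
    by_contra h
    exact hu.2 v hv hu.1 h
  intro a ha b hb hab
  simp only [coe_union, Set.mem_union, mem_coe] at ha hb
  rcases ha with ha | ha <;> rcases hb with hb | hb
  · exact hK (hS ha) (hS hb) hab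
  · exact hsk ha hb
  · exact (hsk hb ha).symm
  · exact hKc (by simpa using (mem_sdiff.mp ha).1) (by simpa using (mem_sdiff.mp hb).1) hab

end SimpleGraph

section

variable {V W : Type*} {G : SimpleGraph V} {H : SimpleGraph W}

theorem colorable_chi [Finite V] (G : SimpleGraph V) : G.Colorable (chi G) :=
  G.colorable_chromaticNumber_of_fintype

theorem chi_le_of_colorable {m : ℕ} (h : G.Colorable m) : chi G ≤ m :=
  ENat.toNat_le_of_le_natCast h.chromaticNumber_le

theorem cliqueNum_le_chi [Finite V] (G : SimpleGraph V) : G.cliqueNum ≤ chi G := by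
  obtain ⟨s, hs⟩ := G.exists_isNClique_cliqueNum
  exact hs.card_eq ▸ hs.isClique.card_le_of_colorable (colorable_chi G)

theorem chi_le_card [Fintype V] (G : SimpleGraph V) : chi G ≤ Fintype.card V :=
  chi_le_of_colorable G.colorable_of_fintype

theorem chi_mono_of_hom [Finite W] (f : G →g H) : chi G ≤ chi H :=
  chi_le_of_colorable ((colorable_chi H).of_hom f)

theorem chi_congr (e : G ≃g H) : chi G = chi H := by
  rw [chi, chi, chromaticNumber_congr e]

theorem fDiff_cast [Finite V] (G : SimpleGraph V) : (fDiff G : ℤ) = chi G - G.cliqueNum :=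
  Nat.cast_sub (cliqueNum_le_chi G)

theorem inM_congr [Fintype V] [Fintype W] {x y : ℤ} (e : G ≃g H) : inM x y G ↔ inM x y H := by
  simp only [inM, fDiff, e.card_eq, chi_congr e, e.cliqueNum_eq]

theorem card_mem_McardSet [Fintype V] {x y : ℤ} (h : inM x y G) :
    Fintype.card V ∈ McardSet x y :=
  ⟨_, (inM_congr (Iso.map (Fintype.equivFin V) G)).mp h⟩

end

theorem chi_le_cliqueNum_of_isClique_compl {V : Type*} [Fintype V] {G : SimpleGraph V}
    {K : Finset V} (hK : G.IsClique (K : Set V)) (hKc : G.IsClique (K : Set V)ᶜ) :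
    chi G ≤ G.cliqueNum := by
  classical
  -- `S` maximises the deficiency `d = #S - #N(S)` of non-adjacency from `K` to `Kᶜ`: the resulting
  -- matching colours `G` with `#Kᶜ + d` colours, and `S ∪ (Kᶜ \ N(S))` is a clique of that size.
  set N : V → Finset V := fun v => {u ∈ Kᶜ | ¬G.Adj v u}
  obtain ⟨S, f, hf, hfN⟩ := exists_injective_sum_fin_card_sub_card_biUnion fun k : K => N k
  set S' := S.image Subtype.val
  have hB : S'.biUnion N = S.biUnion fun k => N k := image_biUnion
  have hBK : S'.biUnion N ⊆ Kᶜ := biUnion_subset.mpr fun _ _ => filter_subset _ _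
  have hcolor : chi G ≤ #Kᶜ + (#S - #(S'.biUnion N)) := by
    rw [hB]
    refine chi_le_of_colorable (colorable_card_compl_add_of_injective f hf fun k a h => ?_)
    simpa [N] using hfN k a h
  have hS' : S' ⊆ K := fun v hv => by
    obtain ⟨k, -, rfl⟩ := mem_image.mp hv
    exact k.2
  have hdisj : Disjoint S' (Kᶜ \ S'.biUnion N) :=
    disjoint_left.mpr fun v hv hv' => mem_compl.mp (mem_sdiff.mp hv').1 (hS' hv)
  have hW := (isClique_union_sdiff_biUnion_nonAdj hK hKc hS').card_le_cliqueNum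
  rw [card_union_of_disjoint hdisj, card_sdiff_of_subset hBK,
    card_image_of_injective _ Subtype.val_injective] at hW
  have hKc' := (coe_compl K ▸ hKc).card_le_cliqueNum
  have := card_le_card hBK
  omega

section

variable {V : Type*} [Fintype V] {G : SimpleGraph V}

theorem exists_not_adj_outside_of_cliqueNum_lt_chi {K : Finset V} (hK : G.IsClique (K : Set V))
    (hlt : G.cliqueNum < chi G) : ∃ v ∉ K, ∃ w ∉ K, v ≠ w ∧ ¬G.Adj v w := by
  by_contra! h
  exact hlt.not_ge (chi_le_cliqueNum_of_isClique_compl hK fun v hv w hw => h v hv w hw)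

theorem card_compl_pair_add_two [DecidableEq V] {v w : V} (hvw : v ≠ w) :
    Fintype.card ↥({v, w} : Set V)ᶜ + 2 = Fintype.card V := by
  have hpair : Fintype.card ({v, w} : Set V) = 2 := by
    rw [Set.card_insert _ (by simpa using hvw), Set.card_singleton]
  have := Fintype.card_compl_set ({v, w} : Set V)
  have := set_fintype_card_le_univ ({v, w} : Set V)
  omega

theorem inM_induce_compl_pair [DecidableEq V] {x y : ℤ}
    (hgap : (Fintype.card V : ℤ) + 2 ≤ chi G + 2 * fDiff G - x) (hfy : (fDiff G : ℤ) ≤ y)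
    {K : Finset V} (hK : G.IsNClique G.cliqueNum K) {v w : V} (hv : v ∉ K) (hw : w ∉ K)
    (hvw : v ≠ w) (hnadj : ¬G.Adj v w) :
    inM x y (G.induce ({v, w} : Set V)ᶜ) := by
  set H := G.induce ({v, w} : Set V)ᶜ
  have hcard := card_compl_pair_add_two hvw
  have hω : H.cliqueNum = G.cliqueNum := cliqueNum_induce_of_subset hK fun u hu => by
    rintro (rfl | rfl) <;> contradiction
  have hχH : chi H ≤ chi G := chi_mono_of_hom (Embedding.induce _).toHom
  have hindep : G.IsIndepSet {v, w} :=
    (isClique_compl G).mp (isClique_pair.mpr fun h => ⟨h, hnadj⟩)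
  have hχG : chi G ≤ chi H + 1 :=
    chi_le_of_colorable (hindep.colorable_succ_of_induce_compl (colorable_chi H))
  have := fDiff_cast H
  have := fDiff_cast G
  constructor <;> omega

end

theorem stmt13 {V : Type*} [Fintype V] (x y : ℤ) (hx : 0 ≤ x)
    (G₀ : SimpleGraph V) (hG₀ : inM x y G₀)
    (hmin : ∀ n ∈ McardSet x y, Fintype.card V ≤ n) :
    (Fintype.card V : ℤ) = chi G₀ + 2 * fDiff G₀ - x - 1 := by
  classical
  obtain ⟨hcard, hfy⟩ := hG₀
  by_contra hne
  have hgap : (Fintype.card V : ℤ) + 2 ≤ chi G₀ + 2 * fDiff G₀ - x := by omega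
  have hlt : G₀.cliqueNum < chi G₀ := by
    have := chi_le_card G₀
    have := fDiff_cast G₀
    omega
  obtain ⟨K, hK⟩ := G₀.exists_isNClique_cliqueNum
  obtain ⟨v, hv, w, hw, hvw, hnadj⟩ := exists_not_adj_outside_of_cliqueNum_lt_chi hK.isClique hlt
  have hsmaller := hmin _ (card_mem_McardSet (inM_induce_compl_pair hgap hfy hK hv hw hvw hnadj))
  have := card_compl_pair_add_two hvw
  omega
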